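/- Let W_{n,k} satisfy W_{n,k} = (2k+1)W_{n-1,k} + (n-2k+1)W_{n-1,k-1} with W_{0,0} = 1 (and W_{n,k}=0 for k<0 or 2k>n+1), and let Z̃(n,k) satisfy Z̃(n,k) = (2k+1)Z̃(n-1,k) + 3Z̃(n-1,k-1) + 2(n-k+1)Z̃(n-1,k-2) with Z̃(0,0)=1 and Z̃(n,k)=0 unless 0 ≤ k ≤ n. Then for all n ≥ 0 the row-generating functions satisfy Z̃_n(x) = (1+x)^n·W_{n+1}(2x/(1+x)), as polynomial identities. -/

import Mathlib

/-!
Both sides satisfy the same first-order differential recurrence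
`P_{n+1} = (1 + 3x + 2n x²) P_n + 2x(1 - x²) P_n'` and agree at `n = 0`. For the rows of `Z̃` this
is the coefficient recurrence read through the Euler operator `x d/dx`. For the substituted rows of
`W`, the operator `x(1 + x) d/dx` acts on `(2x)ᵏ (1 + x)^(n-k)` as multiplication by
`k(1 + x) + (n - k)x`, which turns the recurrence of `W` into the same one.
-/

open Polynomial Finset

namespace Finset

lemma sum_range_add_comp_sub {M : Type*} [AddCommMonoid M] (f : ℕ → ℤ → M) (n m : ℕ)
    (h : ∀ k < m, f k (k - m) = 0) :
    ∑ k ∈ range (n + m), f k (k - m) = ∑ k ∈ range n, f (k + m) k := by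
  rw [add_comm n m, sum_range_add, sum_eq_zero fun k hk ↦ h k (mem_range.mp hk), zero_add]
  refine sum_congr rfl fun k _ ↦ ?_
  rw [add_comm m k, Nat.cast_add, add_sub_cancel_right]

end Finset

namespace Polynomial

variable {R : Type*} [CommRing R]

lemma mul_derivative_pow (p : R[X]) (m : ℕ) :
    p * derivative (p ^ m) = (m : R[X]) * p ^ m * derivative p := by
  rw [derivative_pow, C_eq_natCast]
  rcases m with _ | m
  · simp
  · rw [Nat.add_sub_cancel, pow_succ]
    ring

lemma X_mul_derivative_C_mul_X_pow (c : R) (k : ℕ) :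
    X * derivative (C c * X ^ k) = (k : R[X]) * (C c * X ^ k) := by
  rw [derivative_mul, derivative_C, zero_mul, zero_add, mul_left_comm,
    mul_derivative_pow, derivative_X, mul_one, mul_left_comm]

lemma X_mul_one_add_X_mul_derivative (c : R) (k m : ℕ) :
    X * (1 + X) * derivative ((C c * X) ^ k * (1 + X) ^ m) =
      ((k : R[X]) * (1 + X) + (m : R[X]) * X) * ((C c * X) ^ k * (1 + X) ^ m) := by
  have hX := X_mul_derivative_C_mul_X_pow (c ^ k) k
  have h1X := mul_derivative_pow (1 + X : R[X]) m
  rw [derivative_add, derivative_one, derivative_X, zero_add, mul_one] at h1X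
  rw [mul_pow, ← C_pow, derivative_mul]
  linear_combination (1 + X) * (1 + X) ^ m * hX + X * C (c ^ k) * X ^ k * h1X

end Polynomial

namespace AlternatingRuns

variable {R : Type*} [CommRing R]

noncomputable def runsStep (n : ℕ) (p : R[X]) : R[X] :=
  (1 + 3 * X + 2 * (n : R[X]) * X ^ 2) * p + 2 * X * (1 - X ^ 2) * derivative p

lemma runsStep_sum {ι : Type*} (n : ℕ) (s : Finset ι) (f : ι → R[X]) :
    runsStep n (∑ i ∈ s, f i) = ∑ i ∈ s, runsStep n (f i) := by
  simp only [runsStep, derivative_sum, mul_sum, sum_add_distrib]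

lemma runsStep_C_mul_X_pow (n k : ℕ) (c : R) :
    runsStep n (C c * X ^ k) =
      C ((2 * k + 1) * c) * X ^ k + C (3 * c) * X ^ (k + 1) +
        C (2 * (n - k) * c) * X ^ (k + 2) := by
  have h := X_mul_derivative_C_mul_X_pow c k
  simp only [runsStep, C_mul, C_add, C_sub, map_natCast, map_ofNat, C_1]
  linear_combination 2 * (1 - X ^ 2) * h

lemma runsStep_C_mul_two_X_pow_mul_one_add_X_pow {n k : ℕ} (hk : k ≤ n) (c : R) :
    runsStep n (C c * (C 2 * X) ^ k * (1 + X) ^ (n - k)) =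
      C ((2 * k + 1) * c) * (C 2 * X) ^ k * (1 + X) ^ (n + 1 - k) +
        C ((n + 1 - 2 * k) * c) * (C 2 * X) ^ (k + 1) * (1 + X) ^ (n - k) := by
  have h := X_mul_one_add_X_mul_derivative (2 : R) k (n - k)
  rw [Nat.cast_sub hk] at h
  rw [show n + 1 - k = n - k + 1 by omega, runsStep, mul_assoc (C c), derivative_mul,
    derivative_C, zero_mul, zero_add]
  simp only [C_mul, C_add, C_sub, map_natCast, map_ofNat, C_1] at h ⊢
  linear_combination 2 * (1 - X) * C c * h

noncomputable def rowPoly (a : ℤ → R) (n : ℕ) : R[X] :=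
  ∑ k ∈ range (n + 1), C (a k) * X ^ k

/-- `(1 + x)ⁿ A(2x / (1 + x))` for `A = rowPoly a n`. -/
noncomputable def transformedRowPoly (a : ℤ → R) (n : ℕ) : R[X] :=
  ∑ k ∈ range (n + 1), C (a k) * (C 2 * X) ^ k * (1 + X) ^ (n - k)

lemma rowPoly_succ {n : ℕ} {a b : ℤ → R} (ha_neg_one : a (-1) = 0) (ha_neg_two : a (-2) = 0)
    (ha_top : a (n + 1) = 0)
    (hb : ∀ k : ℤ, b k = (2 * k + 1) * a k + 3 * a (k - 1) + 2 * (n + 1 - k + 1) * a (k - 2)) :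
    rowPoly b (n + 1) = runsStep n (rowPoly a n) := by
  have hsplit : rowPoly b (n + 1) = ∑ k ∈ range (n + 2), (C ((2 * k + 1) * a k) * X ^ k +
      C (3 * a (k - 1)) * X ^ k + C (2 * (n + 1 - k + 1) * a (k - 2)) * X ^ k) :=
    sum_congr rfl fun k _ ↦ by rw [hb]; push_cast; simp only [C_add, add_mul]
  have hS₁ : ∑ k ∈ range (n + 2), C ((2 * k + 1) * a k) * X ^ k =
      ∑ k ∈ range (n + 1), C ((2 * k + 1) * a k) * X ^ k := by
    rw [sum_range_succ, add_eq_left]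
    simp [ha_top]
  have hS₂ : ∑ k ∈ range (n + 2), C (3 * a (k - 1)) * X ^ k =
      ∑ k ∈ range (n + 1), C (3 * a k) * X ^ (k + 1) :=
    sum_range_add_comp_sub (fun k j ↦ C (3 * a j) * X ^ k) (n + 1) 1 (by simp [ha_neg_one])
  have hS₃ : ∑ k ∈ range (n + 2), C (2 * (n + 1 - k + 1) * a (k - 2)) * X ^ k =
      ∑ k ∈ range (n + 1), C (2 * (n - k) * a k) * X ^ (k + 2) := by
    refine (sum_range_add_comp_sub (fun k j ↦ C (2 * (n + 1 - k + 1) * a j) * X ^ k) n 2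
      (by intro k hk; interval_cases k <;> simp [ha_neg_one, ha_neg_two])).trans ?_
    rw [sum_range_succ]
    simp only [sub_self, mul_zero, zero_mul, map_zero, add_zero]
    refine sum_congr rfl fun k _ ↦ ?_
    push_cast
    ring_nf
  rw [hsplit, sum_add_distrib, sum_add_distrib, hS₁, hS₂, hS₃, ← sum_add_distrib,
    ← sum_add_distrib, rowPoly, runsStep_sum]
  simp only [runsStep_C_mul_X_pow]

lemma transformedRowPoly_succ {n : ℕ} {a b : ℤ → R} (ha_neg_one : a (-1) = 0)
    (ha_top : a (n + 1) = 0)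
    (hb : ∀ k : ℤ, b k = (2 * k + 1) * a k + (((n + 1 : ℕ) : R) + 1 - 2 * k + 1) * a (k - 1)) :
    transformedRowPoly b (n + 1) = runsStep n (transformedRowPoly a n) := by
  have hsplit : transformedRowPoly b (n + 1) = ∑ k ∈ range (n + 2),
      (C ((2 * k + 1) * a k) * (C 2 * X) ^ k * (1 + X) ^ (n + 1 - k) +
        C ((n + 1 + 1 - 2 * k + 1) * a (k - 1)) * (C 2 * X) ^ k * (1 + X) ^ (n + 1 - k)) :=
    sum_congr rfl fun k _ ↦ by rw [hb]; push_cast; simp only [C_add, add_mul]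
  have hT₁ : ∑ k ∈ range (n + 2), C ((2 * k + 1) * a k) * (C 2 * X) ^ k * (1 + X) ^ (n + 1 - k) =
      ∑ k ∈ range (n + 1), C ((2 * k + 1) * a k) * (C 2 * X) ^ k * (1 + X) ^ (n + 1 - k) := by
    rw [sum_range_succ, add_eq_left]
    simp [ha_top]
  have hT₂ : ∑ k ∈ range (n + 2),
        C ((n + 1 + 1 - 2 * k + 1) * a (k - 1)) * (C 2 * X) ^ k * (1 + X) ^ (n + 1 - k) =
      ∑ k ∈ range (n + 1), C ((n + 1 - 2 * k) * a k) * (C 2 * X) ^ (k + 1) * (1 + X) ^ (n - k) := by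
    refine (sum_range_add_comp_sub
      (fun k j ↦ C ((n + 1 + 1 - 2 * k + 1) * a j) * (C 2 * X) ^ k * (1 + X) ^ (n + 1 - k)) (n + 1) 1
      (by simp [ha_neg_one])).trans ?_
    refine sum_congr rfl fun k _ ↦ ?_
    rw [Nat.add_sub_add_right]
    push_cast
    ring_nf
  rw [hsplit, sum_add_distrib, hT₁, hT₂, ← sum_add_distrib, transformedRowPoly, runsStep_sum]
  exact sum_congr rfl fun k hk ↦
    (runsStep_C_mul_two_X_pow_mul_one_add_X_pow (Nat.lt_succ_iff.mp (mem_range.mp hk)) _).symm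

end AlternatingRuns

open AlternatingRuns in
theorem alternating_runs_type_B_identity
    (W Z : ℕ → ℤ → ℝ)
    (hW0 : W 0 0 = 1)
    (hWb : ∀ (n : ℕ) (k : ℤ), (k < 0 ∨ (n : ℤ) + 1 < 2 * k) → W n k = 0)
    (hWrec : ∀ (n : ℕ) (k : ℤ),
      W (n + 1) k =
        (2 * (k : ℝ) + 1) * W n k + ((n : ℝ) + 1 - 2 * (k : ℝ) + 1) * W n (k - 1))
    (hZ0 : Z 0 0 = 1)
    (hZb : ∀ (n : ℕ) (k : ℤ), (k < 0 ∨ (n : ℤ) < k) → Z n k = 0)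
    (hZrec : ∀ (n : ℕ) (k : ℤ),
      Z (n + 1) k =
        (2 * (k : ℝ) + 1) * Z n k + 3 * Z n (k - 1) +
          2 * ((n : ℝ) + 1 - (k : ℝ) + 1) * Z n (k - 2)) :
    ∀ n : ℕ,
      (∑ k ∈ Finset.range (n + 1), C (Z n (k : ℤ)) * X ^ k) =
        ∑ k ∈ Finset.range (n + 1),
          C (W (n + 1) (k : ℤ)) * (C 2 * X) ^ k * (1 + X) ^ (n - k) := by
  have hW_top : ∀ n : ℕ, W (n + 1) (n + 1) = 0 := by
    rintro (_ | n)
    · -- not a boundary case of `hWb`: the recurrence gives it with coefficient `0 + 1 - 2 + 1 = 0`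
      have h := hWrec 0 1
      norm_num [hWb 0 1 (by norm_num)] at h ⊢
      exact h
    · exact hWb _ _ (Or.inr (by push_cast; omega))
  have hW_one_zero : W 1 0 = 1 := by
    rw [hWrec 0 0, hW0, hWb 0 (0 - 1) (Or.inl (by norm_num))]
    norm_num
  intro n
  change rowPoly (Z n) n = transformedRowPoly (W (n + 1)) n
  induction n with
  | zero => simp [rowPoly, transformedRowPoly, hZ0, hW_one_zero]
  | succ n ih =>
    rw [rowPoly_succ (hZb n _ (by norm_num)) (hZb n _ (by norm_num)) (hZb n _ (by omega))
      (hZrec n), transformedRowPoly_succ (hWb (n + 1) _ (by norm_num)) (hW_top n) (hWrec (n + 1)), ih]
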